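/- arXiv:1510.05789 — 3 statements merged into one kernel-verified Lean document; each statement's English description precedes it below -/
import Mathlib

section
/- For any ball B = B(x,r) ⊂ ℝ^d there exist α ∈ {0,1,2}^d and a cube Q_B ∈ 𝒟^α such that B ⊂ Q_B and 6r < ℓ(Q_B) ≤ 12r. -/
open MeasureTheory Metric Set Filter ENNReal

noncomputable section

abbrev Rd (d : ℕ) := EuclideanSpace ℝ (Fin d)

variable {d : ℕ}

/-- Axis-parallel cube with corner `c` and side length `l`. -/
def cube (c : Rd d) (l : ℝ) : Set (Rd d) := {y | ∀ i, c i ≤ y i ∧ y i < c i + l}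

/-- The (uncentered) Hardy–Littlewood maximal function, over balls containing the point. -/
def maximal (g : Rd d → ℝ) (x : Rd d) : ℝ≥0∞ :=
  ⨆ (z : Rd d) (ρ : ℝ) (_ : 0 < ρ) (_ : x ∈ ball z ρ),
    ENNReal.ofReal (⨍ y in ball z ρ, |g y|)

/-- The Fujii–Wilson `A_∞` characteristic. -/
def AinfC (w : Rd d → ℝ) : ℝ≥0∞ :=
  ⨆ (c : Rd d) (l : ℝ) (_ : 0 < l),
    (∫⁻ x in cube c l, maximal ((cube c l).indicator w) x) /
      ENNReal.ofReal (∫ x in cube c l, w x)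

/-- The dual weight `w^(1-p')`, `p' = p/(p-1)`. -/
def dualWeight (p : ℝ) (w : Rd d → ℝ) : Rd d → ℝ := fun x => w x ^ (1 - p / (p - 1))

/-- The Muckenhoupt `A_p` characteristic `[w]_{A_p}`. -/
def ApC (p : ℝ) (w : Rd d → ℝ) : ℝ≥0∞ :=
  ⨆ (c : Rd d) (l : ℝ) (_ : 0 < l),
    ENNReal.ofReal ((⨍ x in cube c l, w x) * (⨍ x in cube c l, dualWeight p w x) ^ (p - 1))

/-- Membership in the Muckenhoupt class `A_p`. -/
def MemAp (p : ℝ) (w : Rd d → ℝ) : Prop :=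
  (∀ x, 0 ≤ w x) ∧ LocallyIntegrable w volume ∧
    LocallyIntegrable (dualWeight p w) volume ∧ ApC p w < ⊤

/-- The characteristic `{w}_{A_p} = [w]_{A_p}^{1/p} max([w]_{A_∞}^{1/p'}, [σ]_{A_∞}^{1/p})`. -/
def braceAp (p : ℝ) (w : Rd d → ℝ) : ℝ≥0∞ :=
  ApC p w ^ (1 / p) *
    max (AinfC w ^ (1 - 1 / p)) (AinfC (dualWeight p w) ^ (1 / p))

/-- The characteristic `(w)_{A_p} = max([w]_{A_∞}, [w^{1-p'}]_{A_∞})`. -/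
def parenAp (p : ℝ) (w : Rd d → ℝ) : ℝ≥0∞ :=
  max (AinfC w) (AinfC (dualWeight p w))

/-- Weighted `L^p(w)` norm of a complex valued function. -/
def wLp (p : ℝ) (w : Rd d → ℝ) (f : Rd d → ℂ) : ℝ≥0∞ :=
  (∫⁻ x, ENNReal.ofReal ‖f x‖ ^ p * ENNReal.ofReal (w x)) ^ (1 / p)

/-- Weighted `L^p(w)` norm of an `ℝ≥0∞`-valued function. -/
def wLpE (p : ℝ) (w : Rd d → ℝ) (g : Rd d → ℝ≥0∞) : ℝ≥0∞ :=
  (∫⁻ x, g x ^ p * ENNReal.ofReal (w x)) ^ (1 / p)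

/-- A modulus of continuity: increasing, subadditive, vanishing at `0`. -/
def IsModulus (ω : ℝ → ℝ) : Prop :=
  ω 0 = 0 ∧ MonotoneOn ω (Ici 0) ∧ ∀ s t, 0 ≤ s → 0 ≤ t → ω (s + t) ≤ ω s + ω t

/-- The Dini norm `∫₀¹ ω(t) dt/t`. -/
def DiniNorm (ω : ℝ → ℝ) : ℝ := ∫ t in Ioc (0 : ℝ) 1, ω t / t

/-- The Dini condition. -/
def DiniCond (ω : ℝ → ℝ) : Prop := IntegrableOn (fun t => ω t / t) (Ioc (0 : ℝ) 1)

/-- Standard kernel size estimate with constant `CK`. -/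
def KSize (K : Rd d → Rd d → ℂ) (CK : ℝ) : Prop :=
  ∀ x y, x ≠ y → ‖K x y‖ ≤ CK / dist x y ^ d

/-- Kernel smoothness estimate with modulus of continuity `ω`. -/
def KSmooth (K : Rd d → Rd d → ℂ) (ω : ℝ → ℝ) : Prop :=
  ∀ x x' y : Rd d, 0 < dist x x' → 2 * dist x x' < dist x y →
    ‖K x y - K x' y‖ + ‖K y x - K y x'‖ ≤ ω (dist x x' / dist x y) / dist x y ^ d

/-- `T` is represented by the kernel `K` off the support. -/
def Represents (T : (Rd d → ℂ) → Rd d → ℂ) (K : Rd d → Rd d → ℂ) : Prop :=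
  ∀ f : Rd d → ℂ, Integrable f → ∀ x ∉ tsupport f, T f x = ∫ y, K x y * f y

/-- `A` is a bound for the operator norm of `T` on (unweighted) `L²`. -/
def L2Bound (T : (Rd d → ℂ) → Rd d → ℂ) (A : ℝ) : Prop :=
  ∀ f : Rd d → ℂ, wLp 2 (fun _ => 1) (T f) ≤ ENNReal.ofReal A * wLp 2 (fun _ => 1) f

/-- The `ε`-truncation `T_ε`. -/
def trunc (K : Rd d → Rd d → ℂ) (ε : ℝ) (f : Rd d → ℂ) (x : Rd d) : ℂ :=
  ∫ y in {y | ε < dist x y}, K x y * f y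

/-- The double truncation `T_{ε,δ}`. -/
def truncD (K : Rd d → Rd d → ℂ) (ε δ : ℝ) (f : Rd d → ℂ) (x : Rd d) : ℂ :=
  ∫ y in {y | ε < dist x y ∧ dist x y < δ}, K x y * f y

/-- The maximal truncation `T_♯ f(x) = sup_{ε>0} |T_ε f(x)|`. -/
def maxTrunc (K : Rd d → Rd d → ℂ) (f : Rd d → ℂ) (x : Rd d) : ℝ≥0∞ :=
  ⨆ (ε : ℝ) (_ : 0 < ε), ENNReal.ofReal ‖trunc K ε f x‖

/-- The truncated centered Hardy–Littlewood maximal operator `M^c_{ε,δ}`. -/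
def truncCMax (ε δ : ℝ) (f : Rd d → ℂ) (x : Rd d) : ℝ≥0∞ :=
  ⨆ (ρ : ℝ) (_ : ε < ρ) (_ : ρ < δ), ENNReal.ofReal (⨍ y in ball x ρ, ‖f y‖)

/-- The `P`-localized maximal truncation `T_{♯,P}`. -/
def locMaxTrunc (K : Rd d → Rd d → ℂ) (P : Set (Rd d)) (f : Rd d → ℂ) (x : Rd d) : ℝ≥0∞ :=
  P.indicator (fun x =>
    ⨆ (ε : ℝ) (δ : ℝ) (_ : 0 < ε) (_ : ε < δ) (_ : δ < infDist x (frontier P) / 2),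
      ENNReal.ofReal ‖truncD K ε δ f x‖) x

/-- Cube of the adjacent dyadic system `𝒟^α`: `2^{-k}([0,1)^d + m + (-1)^k α/3)`. -/
def dyadicCube (α : Fin d → Fin 3) (k : ℤ) (m : Fin d → ℤ) : Set (Rd d) :=
  {x | ∀ i, (2 : ℝ) ^ (-k) * ((m i : ℝ) + (-1 : ℝ) ^ k * ((α i : ℕ) : ℝ) / 3) ≤ x i ∧
       x i < (2 : ℝ) ^ (-k) * ((m i : ℝ) + 1 + (-1 : ℝ) ^ k * ((α i : ℕ) : ℝ) / 3)}

/-- The adjacent dyadic system `𝒟^α`. -/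
def dyadicSystem (α : Fin d → Fin 3) : Set (Set (Rd d)) :=
  {Q | ∃ k m, Q = dyadicCube α k m}

/-- `𝒟₀ = ⋃_α 𝒟^α`. -/
def dyadic0 (d : ℕ) : Set (Set (Rd d)) := ⋃ α : Fin d → Fin 3, dyadicSystem α

/-- Sparseness of a collection of cubes. -/
def IsSparse (S : Set (Set (Rd d))) : Prop :=
  ∀ Q ∈ S, volume (⋃ Q' ∈ {Q' ∈ S | Q' ⊂ Q}, Q') ≤ volume Q / 2

/-- The sparse operator `𝒜_S f = Σ_{Q ∈ S} 1_Q ⨍_Q |f|`. -/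
def sparseOp (S : Set (Set (Rd d))) (f : Rd d → ℂ) (x : Rd d) : ℝ≥0∞ :=
  ∑' Q : S, (Q : Set (Rd d)).indicator
      (fun _ => ENNReal.ofReal (⨍ y in (Q : Set (Rd d)), ‖f y‖)) x

/-- Homogeneity of degree `0`. -/
def Homog0 (Ω : Rd d → ℂ) : Prop := ∀ r : ℝ, 0 < r → ∀ x, Ω (r • x) = Ω x

/-- `B` bounds `Ω` away from the origin (`‖Ω‖_{L^∞(S^{d-1})} ≤ B`). -/
def SphereBound (Ω : Rd d → ℂ) (B : ℝ) : Prop := ∀ x : Rd d, x ≠ 0 → ‖Ω x‖ ≤ B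

/-- Mean zero over the unit sphere. -/
def SphereMeanZero (Ω : Rd d → ℂ) : Prop :=
  ∫ y : sphere (0 : Rd d) 1, Ω y ∂((volume : Measure (Rd d)).toSphere) = 0

/-- The truncated kernel `K_k = Ω(x/|x|)|x|^{-d} 1_{2^k<|x|<2^{k+1}}`. -/
def Kk (Ω : Rd d → ℂ) (k : ℤ) (x : Rd d) : ℂ :=
  if (2 : ℝ) ^ k < ‖x‖ ∧ ‖x‖ < (2 : ℝ) ^ (k + 1) then Ω x / (‖x‖ : ℂ) ^ d else 0

/-- The rough homogeneous singular integral `T_Ω`, as a principal value. -/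
def TOmega (Ω : Rd d → ℂ) (f : Rd d → ℂ) (x : Rd d) : ℂ :=
  limUnder (nhdsWithin (0 : ℝ) (Ioi 0))
    (fun ε => ∫ y in {y : Rd d | ε < ‖y‖ ∧ ‖y‖ < 1 / ε}, (Ω y / (‖y‖ : ℂ) ^ d) * f (x - y))

/-- Convolution of two functions. -/
def conv (f g : Rd d → ℂ) (x : Rd d) : ℂ := ∫ t, f t * g (x - t)

/-- The dilation `φ_j(x) = 2^{-jd} φ(2^{-j} x)`. -/
def dilφ (φ : Rd d → ℝ) (j : ℤ) (x : Rd d) : ℝ :=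
  (2 : ℝ) ^ (-j * (d : ℤ)) * φ ((2 : ℝ) ^ (-j) • x)

/-- The partial sum operator `S_j f = f * φ_j`. -/
def Sm (φ : Rd d → ℝ) (j : ℤ) (f : Rd d → ℂ) (x : Rd d) : ℂ :=
  conv f (fun y => (dilφ φ j y : ℂ)) x

/-- A smooth bump as in the partition of unity of the paper. -/
def GoodBump (φ : Rd d → ℝ) : Prop :=
  ContDiff ℝ (⊤ : ℕ∞) φ ∧ HasCompactSupport φ ∧ tsupport φ ⊆ closedBall 0 (1 / 100) ∧
    (∫ x, φ x) = 1

/-- An admissible increasing sequence `0 = N(0) < N(1) < ⋯`. -/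
def Admissible (N : ℕ → ℕ) : Prop := N 0 = 0 ∧ StrictMono N

/-- The smooth pieces `\tilde T_j^N` of `T_Ω`. -/
def smoothPiece (Ω : Rd d → ℂ) (φ : Rd d → ℝ) (N : ℕ → ℕ) (j : ℕ) (f : Rd d → ℂ)
    (x : Rd d) : ℂ :=
  if j = 0 then ∑' k : ℤ, conv (Kk Ω k) (Sm φ k f) x
  else ∑' k : ℤ, conv (Kk Ω k)
    (fun z => Sm φ (k - (N j : ℤ)) f z - Sm φ (k - (N (j - 1) : ℤ)) f z) x

/-- The convolution kernel `K_j^N` of `\tilde T_j^N`. -/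
def smoothKernel (Ω : Rd d → ℂ) (φ : Rd d → ℝ) (N : ℕ → ℕ) (j : ℕ) (x : Rd d) : ℂ :=
  if j = 0 then ∑' k : ℤ, conv (Kk Ω k) (fun y => (dilφ φ k y : ℂ)) x
  else ∑' k : ℤ, conv (Kk Ω k)
    (fun y => ((dilφ φ (k - (N j : ℤ)) y : ℝ) : ℂ) - ((dilφ φ (k - (N (j - 1) : ℤ)) y : ℝ) : ℂ)) x


/-- Lemma 2.1: any ball is contained in a cube of one of the
adjacent dyadic systems of comparable side length. -/
theorem statement4 (d : ℕ) (hd : 1 ≤ d) (x : Rd d) (r : ℝ) (hr : 0 < r) :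
    ∃ (α : Fin d → Fin 3) (k : ℤ) (m : Fin d → ℤ),
      ball x r ⊆ dyadicCube α k m ∧
      6 * r < (2 : ℝ) ^ (-k) ∧ (2 : ℝ) ^ (-k) ≤ 12 * r := by
  obtain ⟨n, hn1, hn2⟩ := exists_mem_Ico_zpow (x := 6 * r) (by linarith) (by norm_num : (1:ℝ) < 2)
  set k : ℤ := -(n + 1) with hk
  set ℓ : ℝ := (2 : ℝ) ^ (-k) with hℓdef
  have hℓ : ℓ = (2 : ℝ) ^ (n + 1) := by rw [hℓdef, hk, neg_neg]
  have hℓ6 : 6 * r < ℓ := by rw [hℓ]; exact hn2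
  have hℓ12 : ℓ ≤ 12 * r := by
    rw [hℓ, zpow_add_one₀ (by norm_num : (2:ℝ) ≠ 0)]
    nlinarith [hn1]
  have hℓpos : (0:ℝ) < ℓ := by linarith
  -- the sign of the shift
  set s : ℤ := if Even k then 1 else -1 with hs
  have hs2 : s * s = 1 := by rcases em (Even k) with h | h <;> simp [hs, h]
  have hsR : (s : ℝ) = (-1 : ℝ) ^ k := by
    rcases Int.even_or_odd k with h | h
    · simp [hs, h, h.neg_one_zpow]
    · simp [hs, h.neg_one_zpow, Int.not_even_iff_odd.2 h]
  set nn : Fin d → ℤ := fun i => ⌊3 * (x i - r) / ℓ⌋ with hnn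
  have hα3 : ∀ i, ((s * nn i) % 3).toNat < 3 := by
    intro i
    have h1 := Int.emod_nonneg (s * nn i) (by norm_num : (3:ℤ) ≠ 0)
    have h2 := Int.emod_lt_of_pos (s * nn i) (by norm_num : (0:ℤ) < 3)
    omega
  refine ⟨fun i => ⟨((s * nn i) % 3).toNat, hα3 i⟩, k,
    fun i => s * ((s * nn i) / 3), ?_, hℓ6, hℓ12⟩
  -- key identity : m i + (-1)^k * α i / 3 = nn i / 3
  have key : ∀ i, (↑(s * ((s * nn i) / 3)) : ℝ) +
      (-1 : ℝ) ^ k * ((((s * nn i) % 3).toNat : ℕ) : ℝ) / 3 = (nn i : ℝ) / 3 := by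
    intro i
    have h1 := Int.emod_nonneg (s * nn i) (by norm_num : (3:ℤ) ≠ 0)
    have hz : 3 * (s * ((s * nn i) / 3)) + s * ((s * nn i) % 3) = nn i := by
      have h0 := Int.mul_ediv_add_emod (s * nn i) 3
      linear_combination s * h0 + nn i * hs2
    rw [← hsR]
    have hcast : ((((s * nn i) % 3).toNat : ℕ) : ℝ) = ((s * nn i % 3 : ℤ) : ℝ) := by
      exact_mod_cast congrArg (Int.cast : ℤ → ℝ) (Int.toNat_of_nonneg h1)
    rw [hcast]
    have := congrArg (fun z : ℤ => (z : ℝ)) hz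
    push_cast at this ⊢
    linarith
  intro y hy
  have hyx : ∀ i, |y i - x i| < r := by
    intro i
    have hd' : dist y x < r := mem_ball.mp hy
    refine lt_of_le_of_lt ?_ hd'
    rw [EuclideanSpace.dist_eq]
    calc |y i - x i| = Real.sqrt ((y i - x i) ^ 2) := (Real.sqrt_sq_eq_abs _).symm
      _ ≤ Real.sqrt (∑ j, dist (y j) (x j) ^ 2) := by
          apply Real.sqrt_le_sqrt
          have := Finset.single_le_sum (f := fun j => dist (y j) (x j) ^ 2)
            (fun j _ => sq_nonneg _) (Finset.mem_univ i)
          simpa [Real.dist_eq] using this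
  intro i
  have h1 : (nn i : ℝ) ≤ 3 * (x i - r) / ℓ := Int.floor_le _
  have h2 : 3 * (x i - r) / ℓ < (nn i : ℝ) + 1 := Int.lt_floor_add_one _
  have h1' : ℓ * ((nn i : ℝ) / 3) ≤ x i - r := by
    rw [le_div_iff₀ hℓpos] at h1
    nlinarith
  have h2' : x i - r < ℓ * ((nn i : ℝ) / 3) + ℓ / 3 := by
    rw [div_lt_iff₀ hℓpos] at h2
    nlinarith
  have hy1 : x i - r < y i := by have := hyx i; rw [abs_lt] at this; linarith
  have hy2 : y i < x i + r := by have := hyx i; rw [abs_lt] at this; linarith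
  constructor
  · rw [key i]; linarith
  · show y i < ℓ * _
    rw [show (↑(s * ((s * nn i) / 3)) : ℝ) + 1 +
        (-1 : ℝ) ^ k * ((((s * nn i) % 3).toNat : ℕ) : ℝ) / 3 =
        ((↑(s * ((s * nn i) / 3)) : ℝ) +
        (-1 : ℝ) ^ k * ((((s * nn i) % 3).toNat : ℕ) : ℝ) / 3) + 1 by ring,
      key i]
    nlinarith

end
end

section
/- Let Q₀ ∈ 𝒟₀. Then for any ball B = B(x,r) contained in Q₀ there exists a cube Q_B ∈ 𝒟₀ such that B ⊂ Q_B ⊆ Q₀ and ℓ(Q_B) ≤ 12r. -/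
open MeasureTheory Metric Set Filter ENNReal

noncomputable section

variable {d : ℕ}

private lemma rep13 (L ε : ℝ) (hε : ε = 1 ∨ ε = -1) (αi : Fin 3) (M t : ℤ) :
    ∃ (β : Fin 3) (m' : ℤ),
      L * ((m' : ℝ) + ε * ((β : ℕ) : ℝ) / 3) =
        L * ((M : ℝ) + ε * ((αi : ℕ) : ℝ) / 3) + L * t + 2 * L / 3 := by
  rcases hε with hε | hε <;> subst hε <;> fin_cases αi
  · exact ⟨2, M + t, by push_cast; norm_num; ring⟩
  · exact ⟨0, M + t + 1, by push_cast; norm_num; ring⟩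
  · exact ⟨1, M + t + 1, by push_cast; norm_num; ring⟩
  · exact ⟨1, M + t + 1, by push_cast; norm_num; ring⟩
  · exact ⟨2, M + t + 1, by push_cast; norm_num; ring⟩
  · exact ⟨0, M + t, by push_cast; norm_num; ring⟩

private lemma oneD (L ε : ℝ) (hL : 0 < L) (hε : ε = 1 ∨ ε = -1) (αi : Fin 3) (M n : ℤ)
    (c r : ℝ) (hr : 0 < r) (hrL : 6 * r ≤ L)
    (h1 : L * ((M : ℝ) + ε * ((αi : ℕ) : ℝ) / 3) ≤ c - r)
    (h2 : c + r ≤ L * ((M : ℝ) + ε * ((αi : ℕ) : ℝ) / 3) + n * L) :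
    ∃ (β : Fin 3) (m' : ℤ),
      L * ((m' : ℝ) + ε * ((β : ℕ) : ℝ) / 3) ≤ c - r ∧
      c + r ≤ L * ((m' : ℝ) + ε * ((β : ℕ) : ℝ) / 3) + L ∧
      L * ((M : ℝ) + ε * ((αi : ℕ) : ℝ) / 3) ≤ L * ((m' : ℝ) + ε * ((β : ℕ) : ℝ) / 3) ∧
      L * ((m' : ℝ) + ε * ((β : ℕ) : ℝ) / 3) + L ≤
        L * ((M : ℝ) + ε * ((αi : ℕ) : ℝ) / 3) + n * L := by
  obtain ⟨A, hA⟩ : ∃ A : ℝ, A = L * ((M : ℝ) + ε * ((αi : ℕ) : ℝ) / 3) := ⟨_, rfl⟩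
  rw [← hA] at h1 h2 ⊢
  set t : ℤ := ⌊(c - r - A) / L⌋ with ht
  have ht0 : 0 ≤ t := Int.floor_nonneg.2 (div_nonneg (by linarith) hL.le)
  have ht0R : (0:ℝ) ≤ (t:ℝ) := by exact_mod_cast ht0
  have hq1 : A + L * t ≤ c - r := by
    have h := Int.floor_le ((c - r - A) / L)
    rw [← ht] at h
    have := (mul_le_mul_of_nonneg_left h hL.le)
    rw [mul_div_cancel₀ _ hL.ne'] at this
    linarith
  have hq2 : c - r < A + L * (t + 1) := by
    have h := Int.lt_floor_add_one ((c - r - A) / L)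
    rw [← ht] at h
    have := (mul_lt_mul_of_pos_left h hL)
    rw [mul_div_cancel₀ _ hL.ne'] at this
    push_cast
    linarith
  by_cases hc : c + r ≤ A + L * ((t:ℝ) + 1)
  · refine ⟨αi, M + t, ?_, ?_, ?_, ?_⟩ <;>
    · have he : L * (((M + t : ℤ) : ℝ) + ε * ((αi : ℕ) : ℝ) / 3) = A + L * t := by
        rw [hA]; push_cast; ring
      rw [he]
      first
      | linarith
      | · -- last goal : A + L*t + L ≤ A + n*L
          have htn : (t:ℝ) + 1 ≤ (n:ℝ) := by
            have hlt : L * (t:ℝ) < L * (n:ℝ) := by nlinarith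
            have : (t:ℝ) < n := lt_of_mul_lt_mul_left hlt hL.le
            have : t < n := by exact_mod_cast this
            exact_mod_cast this
          nlinarith
  · push_neg at hc
    obtain ⟨β, m', he⟩ := rep13 L ε hε αi M t
    rw [← hA] at he
    have htn : (t:ℝ) + 2 ≤ (n:ℝ) := by
      have hlt : L * ((t:ℝ) + 1) < L * (n:ℝ) := by nlinarith
      have : (t:ℝ) + 1 < n := lt_of_mul_lt_mul_left hlt hL.le
      have : t + 1 < n := by exact_mod_cast this
      have : t + 2 ≤ n := by omega
      exact_mod_cast this
    exact ⟨β, m', by rw [he]; linarith, by rw [he]; linarith,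
      by rw [he]; nlinarith [mul_nonneg hL.le ht0R], by rw [he]; nlinarith⟩

private lemma coord_abs {d : ℕ} (y z : Rd d) (i : Fin d) : |y i - z i| ≤ dist y z := by
  rw [EuclideanSpace.dist_eq]
  have h1 : |y i - z i| = Real.sqrt (dist (y i) (z i) ^ 2) := by
    rw [Real.sqrt_sq_eq_abs, Real.dist_eq, abs_abs]
  rw [h1]
  apply Real.sqrt_le_sqrt
  exact Finset.single_le_sum (f := fun j => dist (y j) (z j) ^ 2)
    (fun j _ => sq_nonneg _) (Finset.mem_univ i)

private lemma coord_bounds {d : ℕ} (x : Rd d) (r : ℝ) (hr : 0 < r) (A T : ℝ)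
    (i : Fin d) (h : ∀ y ∈ ball x r, A ≤ y i ∧ y i < A + T) :
    A ≤ x i - r ∧ x i + r ≤ A + T := by
  have key : ∀ t : ℝ, |t| < r → A ≤ x i + t ∧ x i + t < A + T := by
    intro t ht
    have hmem : x + t • EuclideanSpace.single i (1:ℝ) ∈ ball x r := by
      rw [mem_ball, dist_eq_norm, add_sub_cancel_left, norm_smul,
        EuclideanSpace.norm_single]
      simpa using ht
    have happ : (x + t • EuclideanSpace.single i (1:ℝ)) i = x i + t := by
      simp [EuclideanSpace.single_apply]
    have := h _ hmem
    rwa [happ] at this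
  have h0 := key 0 (by simpa using hr)
  constructor
  · by_contra hcon
    push_neg at hcon
    have h1 := key ((A - x i - r) / 2) (by rw [abs_lt]; constructor <;> nlinarith [h0.1])
    nlinarith [h1.1]
  · by_contra hcon
    push_neg at hcon
    have h1 := key ((A + T - x i + r) / 2) (by rw [abs_lt]; constructor <;> nlinarith [h0.2])
    nlinarith [h1.2]

/-- Lemma 2.2: a ball inside a dyadic cube `Q₀ ∈ 𝒟₀` can be
covered by a dyadic cube inside `Q₀` of side length at most `12 r`. -/
theorem statement5 (d : ℕ) (hd : 1 ≤ d) (α : Fin d → Fin 3) (k : ℤ) (m : Fin d → ℤ)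
    (x : Rd d) (r : ℝ) (hr : 0 < r) (hB : ball x r ⊆ dyadicCube α k m) :
    ∃ (β : Fin d → Fin 3) (k' : ℤ) (m' : Fin d → ℤ),
      ball x r ⊆ dyadicCube β k' m' ∧ dyadicCube β k' m' ⊆ dyadicCube α k m ∧
      (2 : ℝ) ^ (-k') ≤ 12 * r := by
  by_cases hbig : (2:ℝ) ^ (-k) ≤ 12 * r
  · exact ⟨α, k, m, hB, subset_rfl, hbig⟩
  push_neg at hbig
  have h6r : (0:ℝ) < 6 * r := by linarith
  set e : ℤ := Int.log 2 (6 * r) + 1 with he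
  have hL1 : 6 * r < (2:ℝ) ^ e := by
    have := Int.lt_zpow_succ_log_self (R := ℝ) (b := 2) (by norm_num) (6 * r)
    simpa [he] using this
  have hL2 : (2:ℝ) ^ e ≤ 12 * r := by
    have h := Int.zpow_log_le_self (R := ℝ) (b := 2) (by norm_num) h6r
    have h2 : (2:ℝ) ^ e = 2 * (2:ℝ) ^ (Int.log 2 (6 * r)) := by
      rw [he, zpow_add₀ (two_ne_zero), zpow_one]; ring
    norm_num at h
    rw [h2]; linarith
  have hL0 : (0:ℝ) < (2:ℝ) ^ e := by positivity
  -- k' := -e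
  have hke : k < -e := by
    have : (2:ℝ) ^ e < (2:ℝ) ^ (-k) := by linarith
    have := (zpow_lt_zpow_iff_right₀ (by norm_num : (1:ℝ) < 2)).mp this
    omega
  set J : ℕ := (-e - k).toNat with hJdef
  have hJ : (J : ℤ) = -e - k := Int.toNat_of_nonneg (by omega)
  have hdvd : (3:ℤ) ∣ 2 ^ J - (-1) ^ J := by
    have hmod : (2:ℤ) ^ J ≡ (-1) ^ J [ZMOD 3] := (Int.ModEq.pow J (by decide)).symm
    simpa using hmod.symm.dvd
  obtain ⟨D, hD⟩ := hdvd
  -- signs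
  set sR : ℝ := (-1:ℝ) ^ k with hsR
  set ε : ℝ := (-1:ℝ) ^ (-e : ℤ) with hεdef
  have hεval : ε = sR * (-1:ℝ) ^ J := by
    rw [hεdef, hsR, show (-e : ℤ) = k + (J : ℤ) by omega,
      zpow_add₀ (by norm_num : (-1:ℝ) ≠ 0), zpow_natCast]
  have hε1 : ε = 1 ∨ ε = -1 := by
    rcases Int.even_or_odd (-e : ℤ) with h | h
    · exact Or.inl (by rw [hεdef]; exact h.neg_one_zpow)
    · exact Or.inr (by rw [hεdef]; exact h.neg_one_zpow)
  have hs1 : sR = 1 ∨ sR = -1 := by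
    rcases Int.even_or_odd k with h | h
    · exact Or.inl (by rw [hsR]; exact h.neg_one_zpow)
    · exact Or.inr (by rw [hsR]; exact h.neg_one_zpow)
  set sZ : ℤ := if Even k then 1 else -1 with hsZ
  have hsZR : ((sZ : ℤ) : ℝ) = sR := by
    rcases Int.even_or_odd k with h | h
    · rw [hsZ, if_pos h, hsR, h.neg_one_zpow]; norm_num
    · rw [hsZ, if_neg (by simpa [Int.even_iff, Int.odd_iff] using h), hsR, h.neg_one_zpow]
      norm_num
  set M : Fin d → ℤ := fun i => 2 ^ J * m i + sZ * (α i : ℕ) * D with hM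
  set L : ℝ := (2:ℝ) ^ e with hLdef
  have hLk : (2:ℝ) ^ (-k) = (2 ^ J : ℤ) * L := by
    push_cast
    rw [hLdef, ← zpow_natCast (2:ℝ) J, ← zpow_add₀ (two_ne_zero)]
    congr 1; omega
  have hss : sR * sR = 1 := by rcases hs1 with h | h <;> rw [h] <;> norm_num
  have hrep : ∀ i, (2:ℝ) ^ (-k) * ((m i : ℝ) + (-1:ℝ) ^ k * ((α i : ℕ) : ℝ) / 3)
      = L * ((M i : ℝ) + ε * ((α i : ℕ) : ℝ) / 3) := by
    intro i
    have hDR : (3:ℝ) * (D : ℝ) = (2:ℝ) ^ J - (-1:ℝ) ^ J := by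
      have := congrArg (fun z : ℤ => (z : ℝ)) hD
      push_cast at this; linarith
    rw [hLk, hM, ← hsR, hεval, ← hsZR]
    push_cast
    linear_combination (-(L * (sZ:ℝ) * ((α i : ℕ) : ℝ)) / 3) * hDR
  have hcb : ∀ i : Fin d,
      L * ((M i : ℝ) + ε * ((α i : ℕ) : ℝ) / 3) ≤ x i - r ∧
      x i + r ≤ L * ((M i : ℝ) + ε * ((α i : ℕ) : ℝ) / 3) + ((2 ^ J : ℤ) : ℝ) * L := by
    intro i
    have hyp : ∀ y ∈ ball x r,
        (2:ℝ) ^ (-k) * ((m i : ℝ) + (-1:ℝ) ^ k * ((α i : ℕ) : ℝ) / 3) ≤ y i ∧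
        y i < (2:ℝ) ^ (-k) * ((m i : ℝ) + (-1:ℝ) ^ k * ((α i : ℕ) : ℝ) / 3) + (2:ℝ) ^ (-k) := by
      intro y hy
      have h := hB hy i
      have hup : (2:ℝ) ^ (-k) * ((m i : ℝ) + 1 + (-1:ℝ) ^ k * ((α i : ℕ) : ℝ) / 3)
          = (2:ℝ) ^ (-k) * ((m i : ℝ) + (-1:ℝ) ^ k * ((α i : ℕ) : ℝ) / 3) + (2:ℝ) ^ (-k) := by
        ring
      exact ⟨h.1, by rw [← hup]; exact h.2⟩
    have h := coord_bounds x r hr _ _ i hyp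
    rw [hrep i, hLk] at h
    exact h
  have key : ∀ i : Fin d, ∃ (βi : Fin 3) (mi : ℤ),
      L * ((mi : ℝ) + ε * ((βi : ℕ) : ℝ) / 3) ≤ x i - r ∧
      x i + r ≤ L * ((mi : ℝ) + ε * ((βi : ℕ) : ℝ) / 3) + L ∧
      L * ((M i : ℝ) + ε * ((α i : ℕ) : ℝ) / 3) ≤ L * ((mi : ℝ) + ε * ((βi : ℕ) : ℝ) / 3) ∧
      L * ((mi : ℝ) + ε * ((βi : ℕ) : ℝ) / 3) + L ≤
        L * ((M i : ℝ) + ε * ((α i : ℕ) : ℝ) / 3) + ((2 ^ J : ℤ) : ℝ) * L := by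
    intro i
    exact oneD L ε hL0 hε1 (α i) (M i) (2 ^ J) (x i) r hr hL1.le (hcb i).1 (hcb i).2
  choose β mm hkey using key
  refine ⟨β, -e, mm, ?_, ?_, ?_⟩
  · intro y hy
    simp only [dyadicCube, mem_setOf_eq, neg_neg]
    intro i
    have habs : |y i - x i| < r := lt_of_le_of_lt (coord_abs y x i) (mem_ball.mp hy)
    rw [abs_lt] at habs
    have h1 := (hkey i).1
    have h2 := (hkey i).2.1
    rw [← hLdef, ← hεdef]
    have hexp : L * ((mm i : ℝ) + 1 + ε * ((β i : ℕ) : ℝ) / 3)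
        = L * ((mm i : ℝ) + ε * ((β i : ℕ) : ℝ) / 3) + L := by ring
    exact ⟨by linarith, by rw [hexp]; linarith⟩
  · intro z hz
    simp only [dyadicCube, mem_setOf_eq, neg_neg] at hz ⊢
    intro i
    have hzi := hz i
    rw [← hLdef, ← hεdef] at hzi
    have hexp : L * ((mm i : ℝ) + 1 + ε * ((β i : ℕ) : ℝ) / 3)
        = L * ((mm i : ℝ) + ε * ((β i : ℕ) : ℝ) / 3) + L := by ring
    rw [hexp] at hzi
    have h3 := (hkey i).2.2.1
    have h4 := (hkey i).2.2.2
    have hup : (2:ℝ) ^ (-k) * ((m i : ℝ) + 1 + (-1:ℝ) ^ k * ((α i : ℕ) : ℝ) / 3)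
        = (2:ℝ) ^ (-k) * ((m i : ℝ) + (-1:ℝ) ^ k * ((α i : ℕ) : ℝ) / 3) + (2:ℝ) ^ (-k) := by
      ring
    rw [hrep i] at hup ⊢
    rw [hup, hLk]
    exact ⟨by linarith [hzi.1], by linarith [hzi.2]⟩
  · rw [neg_neg, ← hLdef]
    exact hL2


end
end

section
/- Let T be an ω-Calderón–Zygmund operator on ℝ^d with Dini-continuous kernel K. There is a dimensional constant c_d such that for all 0 < ε < δ, all f, and all x, x' ∈ ℝ^d with |x − x'| < ε/2, one has |T_{ε,δ} f(x) − T_{ε,δ} f(x')| ≤ c_d (C_K + ‖ω‖_Dini) · M^c_{ε,2δ} f(x). -/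
open MeasureTheory Metric Set Filter ENNReal

noncomputable section

variable {d : ℕ}

section OscHelpers

variable {d : ℕ}

lemma mod_nonneg {ω : ℝ → ℝ} (hω : IsModulus ω) {t : ℝ} (ht : 0 ≤ t) : 0 ≤ ω t := by
  have h := hω.2.1 (le_refl (0:ℝ)) (ht : t ∈ Ici 0) ht
  rwa [hω.1] at h

lemma dini_nonneg {ω : ℝ → ℝ} (hω : IsModulus ω) : 0 ≤ DiniNorm ω := by
  refine setIntegral_nonneg measurableSet_Ioc fun t ht => ?_
  exact div_nonneg (mod_nonneg hω ht.1.le) ht.1.le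

lemma mod_small {ω : ℝ → ℝ} (hω : IsModulus ω) (hD : DiniCond ω) {η : ℝ} (hη : 0 < η) :
    ∃ t₀ : ℝ, 0 < t₀ ∧ t₀ ≤ 1 ∧ ω t₀ ≤ η := by
  by_contra hcon
  push_neg at hcon
  have h1 : IntegrableOn (fun t : ℝ => η * t⁻¹) (Ioc (0:ℝ) 1) volume := by
    refine Integrable.mono' hD ((measurable_inv.const_mul η).aestronglyMeasurable) ?_
    rw [ae_restrict_iff' measurableSet_Ioc]
    refine ae_of_all _ fun t ht => ?_
    have ht0 : 0 < t := ht.1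
    rw [Real.norm_eq_abs, abs_of_nonneg (by positivity : (0:ℝ) ≤ η * t⁻¹), div_eq_mul_inv]
    have : η ≤ ω t := (hcon t ht.1 ht.2).le
    gcongr
  have h2 : IntegrableOn (fun t : ℝ => t⁻¹) (Ioc (0:ℝ) 1) volume := by
    have h3 := h1.const_mul η⁻¹
    have : (fun t : ℝ => η⁻¹ * (η * t⁻¹)) = fun t : ℝ => t⁻¹ := by
      funext t; rw [← mul_assoc, inv_mul_cancel₀ hη.ne', one_mul]
    rwa [this] at h3
  have h3 : IntegrableOn (fun t : ℝ => t ^ (-1 : ℝ)) (Ioo (0:ℝ) 1) volume := by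
    apply (h2.mono_set Ioo_subset_Ioc_self).congr_fun ?_ measurableSet_Ioo
    intro t ht
    show t⁻¹ = t ^ (-1 : ℝ)
    rw [Real.rpow_neg_one]
  have := (intervalIntegral.integrableOn_Ioo_rpow_iff one_pos).mp h3
  norm_num at this

lemma K_contOn {ω : ℝ → ℝ} {K : Rd d → Rd d → ℂ} (hω : IsModulus ω) (hD : DiniCond ω)
    (hKs : KSmooth K ω) (x : Rd d) : ContinuousOn (fun y => K x y) {y : Rd d | y ≠ x} := by
  intro y₀ hy₀
  have hDpos : (0:ℝ) < dist y₀ x := dist_pos.2 hy₀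
  have hDd : (0:ℝ) < dist y₀ x ^ d := pow_pos hDpos d
  apply ContinuousAt.continuousWithinAt
  rw [Metric.continuousAt_iff]
  intro η hη
  obtain ⟨t₀, ht₀, _, ht₂⟩ := mod_small hω hD (show 0 < η/2 * dist y₀ x ^ d by positivity)
  refine ⟨min (t₀ * dist y₀ x) (dist y₀ x / 2), by positivity, fun {y} hy => ?_⟩
  rcases eq_or_ne y y₀ with rfl | hne
  · simpa using hη
  · have hyy : 0 < dist y₀ y := dist_pos.2 (Ne.symm hne)
    have hyd : dist y₀ y < min (t₀ * dist y₀ x) (dist y₀ x / 2) := by rwa [dist_comm] at hy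
    have h2 : 2 * dist y₀ y < dist y₀ x := by
      have := lt_of_lt_of_le hyd (min_le_right _ _); linarith
    have hb := hKs y₀ y x hyy h2
    have hb2 : ‖K x y₀ - K x y‖ ≤ ω (dist y₀ y / dist y₀ x) / dist y₀ x ^ d :=
      le_trans (le_add_of_nonneg_left (norm_nonneg _)) hb
    have hratio : dist y₀ y / dist y₀ x ≤ t₀ := by
      rw [div_le_iff₀ hDpos]
      exact (lt_of_lt_of_le hyd (min_le_left _ _)).le
    have hωb : ω (dist y₀ y / dist y₀ x) ≤ η/2 * dist y₀ x ^ d := by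
      refine le_trans (hω.2.1 ?_ ?_ hratio) ht₂
      · exact div_nonneg hyy.le hDpos.le
      · exact ht₀.le
    have : dist (K x y) (K x y₀) ≤ (η/2 * dist y₀ x ^ d) / dist y₀ x ^ d := by
      rw [dist_eq_norm, ← norm_sub_rev]
      exact le_trans hb2 (by gcongr)
    rw [mul_div_assoc, div_self hDd.ne', mul_one] at this
    linarith

lemma integrableOn_K_mul {K : Rd d → Rd d → ℂ} {CK : ℝ} (hCK : 0 ≤ CK)
    (hKsize : KSize K CK) {z : Rd d} (hcont : ContinuousOn (fun y => K z y) {y : Rd d | y ≠ z})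
    {f : Rd d → ℂ} (hf : LocallyIntegrable f volume)
    {r R : ℝ} (hr : 0 < r) {S : Set (Rd d)} (hS : MeasurableSet S)
    (h1 : ∀ y ∈ S, r < dist z y) (h2 : S ⊆ closedBall z R) :
    IntegrableOn (fun y => K z y * f y) S volume := by
  have hfS : IntegrableOn f S volume :=
    (hf.integrableOn_isCompact (isCompact_closedBall z R)).mono_set h2
  have hSne : S ⊆ {y : Rd d | y ≠ z} := by
    intro y hy h
    have := h1 y hy
    rw [h, dist_self] at this
    linarith
  refine Integrable.mono' (hfS.norm.const_mul (CK / r ^ d)) ?_ ?_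
  · exact ((hcont.mono hSne).aestronglyMeasurable hS).mul hf.aestronglyMeasurable.restrict
  · rw [ae_restrict_iff' hS]
    refine ae_of_all _ fun y hy => ?_
    have hzy : r < dist z y := h1 y hy
    have hne : z ≠ y := by
      intro h; rw [h, dist_self] at hzy; linarith
    rw [norm_mul]
    have hK1 : ‖K z y‖ ≤ CK / dist z y ^ d := hKsize z y hne
    have hK2 : CK / dist z y ^ d ≤ CK / r ^ d := by
      gcongr
      all_goals first
      | exact hCK
      | exact pow_pos hr d
      | exact hzy.le
      | exact hr.le
    exact mul_le_mul_of_nonneg_right (hK1.trans hK2) (norm_nonneg _)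

lemma exists_annulus {ε r : ℝ} (hε : 0 < ε) (hr : ε < r) :
    ∃ k : ℕ, (2:ℝ)^k * ε ≤ r ∧ r < 2^(k+1) * ε := by
  have hre : 1 < r / ε := (one_lt_div hε).2 hr
  obtain ⟨n, hn⟩ := exists_mem_Ico_zpow (show (0:ℝ) < r/ε by positivity) one_lt_two
  have hn1 : (2:ℝ) ^ n ≤ r / ε := hn.1
  have hn2 : r / ε < (2:ℝ) ^ (n + 1) := hn.2
  have hn0 : 0 ≤ n := by
    by_contra h
    push_neg at h
    have hle : n + 1 ≤ 0 := by omega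
    have : (2:ℝ) ^ (n+1) ≤ 1 := zpow_le_one_of_nonpos₀ (by norm_num) hle
    linarith
  refine ⟨n.toNat, ?_, ?_⟩
  · have : ((2:ℝ) ^ n.toNat : ℝ) = (2:ℝ) ^ n := by
      rw [← zpow_natCast, Int.toNat_of_nonneg hn0]
    rw [this, ← le_div_iff₀ hε]
    exact hn1
  · have : ((2:ℝ) ^ (n.toNat + 1) : ℝ) = (2:ℝ) ^ (n + 1) := by
      rw [← zpow_natCast]
      congr 1
      omega
    rw [this, ← div_lt_iff₀ hε]
    exact hn2

lemma dini_sum {ω : ℝ → ℝ} (hω : IsModulus ω) (hD : DiniCond ω) (N : ℕ) :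
    (∑ k ∈ Finset.range N, ω (((2:ℝ) ^ (k+1))⁻¹)) * Real.log 2 ≤ DiniNorm ω := by
  have hkey : ∀ k : ℕ, ω (((2:ℝ)^(k+1))⁻¹) * Real.log 2 ≤
      ∫ t in Ioc (((2:ℝ)^(k+1))⁻¹) (((2:ℝ)^k)⁻¹), ω t / t := by
    intro k
    set c : ℝ := ((2:ℝ)^(k+1))⁻¹ with hc
    set b : ℝ := ((2:ℝ)^k)⁻¹ with hb
    have hcpos : 0 < c := by positivity
    have hbpos : 0 < b := by positivity
    have hcb : c < b := by
      rw [hc, hb]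
      apply inv_strictAnti₀ (by positivity)
      exact pow_lt_pow_right₀ one_lt_two (by omega)
    have hb1 : b ≤ 1 := by
      rw [hb]
      exact inv_le_one_of_one_le₀ (one_le_pow₀ one_le_two)
    have hbc2 : b / c = 2 := by
      rw [hc, hb, pow_succ]
      field_simp
    have hInt : ∫ t in Ioc c b, t⁻¹ = Real.log 2 := by
      rw [← intervalIntegral.integral_of_le hcb.le, integral_inv, hbc2]
      intro h
      rcases h with ⟨h1, _⟩
      rw [min_eq_left hcb.le] at h1
      linarith
    have hconst : ∫ t in Ioc c b, ω c * t⁻¹ = ω c * Real.log 2 := by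
      rw [integral_const_mul, hInt]
    rw [← hconst]
    have hi1 : IntegrableOn (fun t : ℝ => ω c * t⁻¹) (Ioc c b) volume := by
      have hco : ContinuousOn (fun t : ℝ => ω c * t⁻¹) (Icc c b) :=
        continuousOn_const.mul (continuousOn_inv₀.mono (fun t ht => by
          simp only [mem_compl_iff, mem_singleton_iff]
          intro h; rw [h] at ht; exact absurd ht.1 (by linarith)))
      exact (hco.integrableOn_compact isCompact_Icc).mono_set Ioc_subset_Icc_self
    have hi2 : IntegrableOn (fun t : ℝ => ω t / t) (Ioc c b) volume :=
      hD.mono_set (Ioc_subset_Ioc hcpos.le hb1)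
    refine setIntegral_mono_on hi1 hi2 measurableSet_Ioc fun t ht => ?_
    rw [div_eq_mul_inv]
    have htpos : 0 < t := lt_trans hcpos ht.1
    gcongr
    · exact hω.2.1 hcpos.le (le_of_lt (lt_of_lt_of_le hcpos ht.1.le) : t ∈ Ici 0) ht.1.le
  have hsum : ∀ N : ℕ, ∑ k ∈ Finset.range N, ∫ t in Ioc (((2:ℝ)^(k+1))⁻¹) (((2:ℝ)^k)⁻¹), ω t / t
      = ∫ t in Ioc (((2:ℝ)^N)⁻¹) 1, ω t / t := by
    intro N
    induction N with
    | zero => simp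
    | succ n ih =>
      rw [Finset.sum_range_succ, ih, add_comm]
      have hd1 : Disjoint (Ioc (((2:ℝ)^(n+1))⁻¹) (((2:ℝ)^n)⁻¹)) (Ioc (((2:ℝ)^n)⁻¹) 1) :=
        Set.Ioc_disjoint_Ioc_of_le le_rfl
      have hcp : (0:ℝ) < ((2:ℝ)^(n+1))⁻¹ := by positivity
      have hbp : (0:ℝ) < ((2:ℝ)^n)⁻¹ := by positivity
      have hb1 : ((2:ℝ)^n)⁻¹ ≤ 1 := inv_le_one_of_one_le₀ (one_le_pow₀ one_le_two)
      have hcb : ((2:ℝ)^(n+1))⁻¹ ≤ ((2:ℝ)^n)⁻¹ := by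
        apply inv_anti₀ (by positivity)
        exact pow_le_pow_right₀ one_le_two (by omega)
      rw [← setIntegral_union hd1 measurableSet_Ioc
        (hD.mono_set (Ioc_subset_Ioc hcp.le hb1)) (hD.mono_set (Ioc_subset_Ioc hbp.le le_rfl)),
        Set.Ioc_union_Ioc_eq_Ioc hcb hb1]
  calc (∑ k ∈ Finset.range N, ω (((2:ℝ) ^ (k+1))⁻¹)) * Real.log 2
      = ∑ k ∈ Finset.range N, ω (((2:ℝ) ^ (k+1))⁻¹) * Real.log 2 := by rw [Finset.sum_mul]
    _ ≤ ∑ k ∈ Finset.range N, ∫ t in Ioc (((2:ℝ)^(k+1))⁻¹) (((2:ℝ)^k)⁻¹), ω t / t :=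
        Finset.sum_le_sum fun k _ => hkey k
    _ = ∫ t in Ioc (((2:ℝ)^N)⁻¹) 1, ω t / t := hsum N
    _ ≤ DiniNorm ω := by
        refine setIntegral_mono_set hD ?_ ?_
        · filter_upwards [ae_restrict_mem measurableSet_Ioc] with t ht
          exact div_nonneg (mod_nonneg hω ht.1.le) ht.1.le
        · exact HasSubset.Subset.eventuallyLE (Ioc_subset_Ioc (by positivity) le_rfl)

lemma lint_ball_le {f : Rd d → ℂ} (hf : LocallyIntegrable f volume) (x : Rd d) {ρ : ℝ}
    (hρ : 0 < ρ) :
    ∫⁻ y in ball x ρ, (‖f y‖₊ : ℝ≥0∞) ≤ ENNReal.ofReal (ρ ^ d) * volume (ball (0:Rd d) 1) *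
      ENNReal.ofReal (⨍ y in ball x ρ, ‖f y‖) := by
  have hfi : IntegrableOn f (ball x ρ) volume :=
    (hf.integrableOn_isCompact (isCompact_closedBall x ρ)).mono_set ball_subset_closedBall
  have h1 : ∫⁻ y in ball x ρ, (‖f y‖₊ : ℝ≥0∞) = ENNReal.ofReal (∫ y in ball x ρ, ‖f y‖) :=
    (ofReal_integral_norm_eq_lintegral_enorm hfi).symm
  have hμpos : volume (ball x ρ) ≠ 0 := (measure_ball_pos volume x hρ).ne'
  have hμlt : volume (ball x ρ) ≠ ⊤ := measure_ball_lt_top.ne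
  have h2 : ∫ y in ball x ρ, ‖f y‖ = (volume (ball x ρ)).toReal * ⨍ y in ball x ρ, ‖f y‖ := by
    rw [setAverage_eq, measureReal_def, smul_eq_mul, ← mul_assoc, mul_inv_cancel₀
      (ENNReal.toReal_ne_zero.mpr ⟨hμpos, hμlt⟩), one_mul]
  rw [h1, h2, ENNReal.ofReal_mul ENNReal.toReal_nonneg, ENNReal.ofReal_toReal hμlt,
    Measure.addHaar_ball_of_pos volume x hρ, finrank_euclideanSpace_fin]

lemma K_le {K : Rd d → Rd d → ℂ} {CK : ℝ} (hCK : 0 ≤ CK) (hKsize : KSize K CK)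
    {z y : Rd d} {r : ℝ} (hr : 0 < r) (h : r ≤ dist z y) : ‖K z y‖ ≤ CK / r ^ d := by
  have hzy : 0 < dist z y := lt_of_lt_of_le hr h
  have hne : z ≠ y := dist_pos.1 hzy
  refine le_trans (hKsize z y hne) ?_
  gcongr
  all_goals first
  | exact hCK
  | exact pow_pos hr d
  | exact h
  | exact hr.le

end OscHelpers


set_option maxHeartbeats 2000000 in
/-- Lemma 2.3: oscillation of the double truncations is
controlled by the truncated centered maximal operator. -/
theorem statement6 (d : ℕ) (hd : 1 ≤ d) :
    ∃ c : ℝ, 0 < c ∧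
      ∀ ω : ℝ → ℝ, IsModulus ω → DiniCond ω →
      ∀ (K : Rd d → Rd d → ℂ) (CK : ℝ), KSize K CK → KSmooth K ω →
      ∀ ε δ : ℝ, 0 < ε → ε < δ →
      ∀ f : Rd d → ℂ, LocallyIntegrable f volume →
      ∀ x x' : Rd d, dist x x' < ε / 2 →
        ENNReal.ofReal ‖truncD K ε δ f x - truncD K ε δ f x'‖ ≤
          ENNReal.ofReal (c * (CK + DiniNorm ω)) * truncCMax ε (2 * δ) f x := by
  classical
  set V : ℝ≥0∞ := volume (ball (0 : Rd d) 1) with hVdef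
  have hVpos : 0 < V := measure_ball_pos _ _ one_pos
  have hVlt : V ≠ ⊤ := measure_ball_lt_top.ne
  have hlog2 : (0:ℝ) < Real.log 2 := Real.log_pos one_lt_two
  set C₀ : ℝ := 4 ^ d * (4 + 1 / Real.log 2) with hC₀def
  have hC₀pos : 0 < C₀ := by positivity
  have hVR : 0 < V.toReal := ENNReal.toReal_pos hVpos.ne' hVlt
  refine ⟨V.toReal * C₀, mul_pos hVR hC₀pos, ?_⟩
  intro ω hω hD K CK hKsize hKsm ε δ hε hεδ f hf x x' hxx'
  have hCK : 0 ≤ CK := by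
    set y₀ : Rd d := EuclideanSpace.single (⟨0, hd⟩ : Fin d) (1:ℝ) with hy₀def
    have hy₀ : ‖y₀‖ = 1 := by
      rw [hy₀def, EuclideanSpace.norm_single]; norm_num
    have hne : (0 : Rd d) ≠ y₀ := by
      intro h
      rw [← h, norm_zero] at hy₀
      norm_num at hy₀
    have hb := hKsize 0 y₀ hne
    rw [dist_zero_left, hy₀, one_pow, div_one] at hb
    exact le_trans (norm_nonneg _) hb
  have hD0 : 0 ≤ DiniNorm ω := dini_nonneg hω
  rcases eq_or_ne x x' with rfl | hnexx
  · simp only [sub_self, norm_zero, ENNReal.ofReal_zero]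
    exact zero_le
  have hapos : 0 < dist x x' := dist_pos.2 hnexx
  have hδpos : 0 < δ := hε.trans hεδ
  set M : ℝ≥0∞ := truncCMax ε (2 * δ) f x with hMdef
  set A : Set (Rd d) := {y | ε < dist x y ∧ dist x y < δ} with hAdef
  set A' : Set (Rd d) := {y | ε < dist x' y ∧ dist x' y < δ} with hA'def
  have hopen : ∀ z : Rd d, IsOpen {y : Rd d | ε < dist z y ∧ dist z y < δ} := by
    intro z
    have h1 : IsOpen {y : Rd d | ε < dist z y} :=
      isOpen_lt continuous_const (continuous_const.dist continuous_id)
    have h2 : IsOpen {y : Rd d | dist z y < δ} :=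
      isOpen_lt (continuous_const.dist continuous_id) continuous_const
    rw [Set.setOf_and]
    exact h1.inter h2
  have hmA : MeasurableSet A := (hopen x).measurableSet
  have hmA' : MeasurableSet A' := (hopen x').measurableSet
  have hKc : ∀ z : Rd d, ContinuousOn (fun y => K z y) {y : Rd d | y ≠ z} :=
    fun z => K_contOn hω hD hKsm z
  have hM : ∀ ρ : ℝ, ε < ρ → ρ < 2 * δ →
      ENNReal.ofReal (⨍ y in ball x ρ, ‖f y‖) ≤ M := by
    intro ρ h1 h2
    rw [hMdef]
    unfold truncCMax
    refine le_trans ?_ (le_iSup _ ρ)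
    rw [iSup_pos h1, iSup_pos h2]
  have hB : ∀ ρ : ℝ, ε < ρ → ρ < 2 * δ →
      ∫⁻ y in ball x ρ, (‖f y‖₊ : ℝ≥0∞) ≤ ENNReal.ofReal (ρ ^ d) * V * M := by
    intro ρ h1 h2
    refine le_trans (lint_ball_le hf x (hε.trans h1)) ?_
    exact mul_le_mul_right (hM ρ h1 h2) _
  have hreg : ∀ (g : Rd d → ℂ) (S : Set (Rd d)) (Cb ρ : ℝ), MeasurableSet S → 0 ≤ Cb →
      ε < ρ → ρ < 2 * δ → (∀ y ∈ S, ‖g y‖ ≤ Cb) → S ⊆ ball x ρ →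
      ∫⁻ y in S, (‖g y * f y‖₊ : ℝ≥0∞) ≤ ENNReal.ofReal (Cb * ρ ^ d) * V * M := by
    intro g S Cb ρ hS hCb h1 h2 hbound hsub
    have step1 : ∫⁻ y in S, (‖g y * f y‖₊ : ℝ≥0∞) ≤
        ∫⁻ y in S, ENNReal.ofReal Cb * (‖f y‖₊ : ℝ≥0∞) := by
      apply lintegral_mono_ae
      rw [ae_restrict_iff' hS]
      refine ae_of_all _ fun y hy => ?_
      calc (‖g y * f y‖₊ : ℝ≥0∞) = ENNReal.ofReal (‖g y‖ * ‖f y‖) := by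
            rw [← norm_mul, ofReal_norm_eq_enorm]; rfl
        _ ≤ ENNReal.ofReal (Cb * ‖f y‖) := ENNReal.ofReal_le_ofReal
            (mul_le_mul_of_nonneg_right (hbound y hy) (norm_nonneg _))
        _ = ENNReal.ofReal Cb * (‖f y‖₊ : ℝ≥0∞) := by
            rw [ENNReal.ofReal_mul hCb, ofReal_norm_eq_enorm]; rfl
    refine le_trans step1 ?_
    rw [lintegral_const_mul' _ _ ENNReal.ofReal_ne_top]
    calc ENNReal.ofReal Cb * ∫⁻ y in S, (‖f y‖₊ : ℝ≥0∞)
        ≤ ENNReal.ofReal Cb * ∫⁻ y in ball x ρ, (‖f y‖₊ : ℝ≥0∞) :=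
          mul_le_mul_right (lintegral_mono_set hsub) _
      _ ≤ ENNReal.ofReal Cb * (ENNReal.ofReal (ρ ^ d) * V * M) :=
          mul_le_mul_right (hB ρ h1 h2) _
      _ = ENNReal.ofReal (Cb * ρ ^ d) * V * M := by
          rw [ENNReal.ofReal_mul hCb]; ring
  have hIA : IntegrableOn (fun y => K x y * f y) A volume := by
    refine integrableOn_K_mul (R := δ) hCK hKsize (hKc x) hf hε hmA (fun y hy => hy.1) ?_
    intro y hy
    rw [mem_closedBall, dist_comm]
    exact hy.2.le
  have hIA' : IntegrableOn (fun y => K x' y * f y) A' volume := by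
    refine integrableOn_K_mul (R := δ) hCK hKsize (hKc x') hf hε hmA' (fun y hy => hy.1) ?_
    intro y hy
    rw [mem_closedBall, dist_comm]
    exact hy.2.le
  have hI1 : IntegrableOn (fun y => K x y * f y) (A ∩ A') volume :=
    hIA.mono_set inter_subset_left
  have hI2 : IntegrableOn (fun y => K x' y * f y) (A ∩ A') volume :=
    hIA'.mono_set inter_subset_right
  have hI3 : IntegrableOn (fun y => K x y * f y) (A \ A') volume := hIA.mono_set diff_subset
  have hI4 : IntegrableOn (fun y => K x' y * f y) (A' \ A) volume := hIA'.mono_set diff_subset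
  have e1 : ∫ y in A, K x y * f y =
      (∫ y in A ∩ A', K x y * f y) + ∫ y in A \ A', K x y * f y := by
    rw [← setIntegral_union (Set.disjoint_sdiff_right.mono_left inter_subset_right)
      (hmA.diff hmA') hI1 hI3, Set.inter_union_diff]
  have e2 : ∫ y in A', K x' y * f y =
      (∫ y in A ∩ A', K x' y * f y) + ∫ y in A' \ A, K x' y * f y := by
    have hAA : A' = (A ∩ A') ∪ (A' \ A) := by
      rw [inter_comm, Set.inter_union_diff]
    nth_rewrite 1 [hAA]
    exact setIntegral_union (Set.disjoint_sdiff_right.mono_left inter_subset_left)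
      (hmA'.diff hmA) hI2 hI4
  have e3 : (∫ y in A ∩ A', K x y * f y) - ∫ y in A ∩ A', K x' y * f y =
      ∫ y in A ∩ A', (K x y - K x' y) * f y := by
    rw [← integral_sub hI1 hI2]
    simp only [sub_mul]
  have hdec : truncD K ε δ f x - truncD K ε δ f x' =
      (∫ y in A ∩ A', (K x y - K x' y) * f y) + ((∫ y in A \ A', K x y * f y) -
        ∫ y in A' \ A, K x' y * f y) := by
    show (∫ y in A, K x y * f y) - ∫ y in A', K x' y * f y = _
    rw [e1, e2, ← e3]
    ring
  have hnorm : ‖truncD K ε δ f x - truncD K ε δ f x'‖ ≤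
      ‖∫ y in A ∩ A', (K x y - K x' y) * f y‖ + ‖∫ y in A \ A', K x y * f y‖ +
      ‖∫ y in A' \ A, K x' y * f y‖ := by
    rw [hdec]
    refine le_trans (norm_add_le _ _) ?_
    rw [add_assoc]
    gcongr
    exact norm_sub_le _ _
  have hofReal : ENNReal.ofReal ‖truncD K ε δ f x - truncD K ε δ f x'‖ ≤
      (∫⁻ y in A ∩ A', (‖(K x y - K x' y) * f y‖₊ : ℝ≥0∞)) +
      (∫⁻ y in A \ A', (‖K x y * f y‖₊ : ℝ≥0∞)) +
      (∫⁻ y in A' \ A, (‖K x' y * f y‖₊ : ℝ≥0∞)) := by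
    refine le_trans (ENNReal.ofReal_le_ofReal hnorm) ?_
    rw [ENNReal.ofReal_add (by positivity) (norm_nonneg _),
      ENNReal.ofReal_add (norm_nonneg _) (norm_nonneg _)]
    gcongr
    · rw [ofReal_norm_eq_enorm]; exact enorm_integral_le_lintegral_enorm _
    · rw [ofReal_norm_eq_enorm]; exact enorm_integral_le_lintegral_enorm _
    · rw [ofReal_norm_eq_enorm]; exact enorm_integral_le_lintegral_enorm _
  -- the two error terms
  have hQ : ∫⁻ y in A \ A', (‖K x y * f y‖₊ : ℝ≥0∞) ≤
      ENNReal.ofReal (CK / ε ^ d * (2 * ε) ^ d) * V * M +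
      ENNReal.ofReal (CK / (δ / 2) ^ d * δ ^ d) * V * M := by
    have hmS₁ : MeasurableSet (A ∩ {y : Rd d | dist x' y ≤ ε}) :=
      hmA.inter (isClosed_le (continuous_const.dist continuous_id)
        continuous_const).measurableSet
    have hmS₂ : MeasurableSet (A ∩ {y : Rd d | δ ≤ dist x' y}) :=
      hmA.inter (isClosed_le continuous_const
        (continuous_const.dist continuous_id)).measurableSet
    have hsub : A \ A' ⊆ (A ∩ {y : Rd d | dist x' y ≤ ε}) ∪ (A ∩ {y : Rd d | δ ≤ dist x' y}) := by
      rintro y ⟨hyA, hyA'⟩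
      rw [hA'def, mem_setOf_eq, not_and_or, not_lt, not_lt] at hyA'
      rcases hyA' with h | h
      · exact Or.inl ⟨hyA, h⟩
      · exact Or.inr ⟨hyA, h⟩
    refine le_trans (lintegral_mono_set hsub) (le_trans (lintegral_union_le _ _ _) ?_)
    gcongr
    · refine hreg (fun y => K x y) _ (CK / ε ^ d) (2 * ε) hmS₁ (by positivity)
        (by linarith) (by linarith) ?_ ?_
      · intro y hy
        exact K_le hCK hKsize hε hy.1.1.le
      · intro y hy
        rw [mem_ball, dist_comm]
        have ht := dist_triangle x x' y
        have h2 : dist x' y ≤ ε := hy.2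
        linarith
    · refine hreg (fun y => K x y) _ (CK / (δ / 2) ^ d) δ hmS₂ (by positivity)
        hεδ (by linarith) ?_ ?_
      · intro y hy
        have ht := dist_triangle x' x y
        rw [dist_comm x' x] at ht
        have h2 : δ ≤ dist x' y := hy.2
        exact K_le hCK hKsize (by linarith) (by linarith)
      · intro y hy
        rw [mem_ball, dist_comm]
        exact hy.1.2
  have hR : ∫⁻ y in A' \ A, (‖K x' y * f y‖₊ : ℝ≥0∞) ≤
      ENNReal.ofReal (CK / ε ^ d * (2 * ε) ^ d) * V * M +
      ENNReal.ofReal (CK / (δ / 2) ^ d * (3 / 2 * δ) ^ d) * V * M := by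
    have hmT₁ : MeasurableSet (A' ∩ {y : Rd d | dist x y ≤ ε}) :=
      hmA'.inter (isClosed_le (continuous_const.dist continuous_id)
        continuous_const).measurableSet
    have hmT₂ : MeasurableSet (A' ∩ {y : Rd d | δ ≤ dist x y}) :=
      hmA'.inter (isClosed_le continuous_const
        (continuous_const.dist continuous_id)).measurableSet
    have hsub : A' \ A ⊆ (A' ∩ {y : Rd d | dist x y ≤ ε}) ∪ (A' ∩ {y : Rd d | δ ≤ dist x y}) := by
      rintro y ⟨hyA', hyA⟩
      rw [hAdef, mem_setOf_eq, not_and_or, not_lt, not_lt] at hyA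
      rcases hyA with h | h
      · exact Or.inl ⟨hyA', h⟩
      · exact Or.inr ⟨hyA', h⟩
    refine le_trans (lintegral_mono_set hsub) (le_trans (lintegral_union_le _ _ _) ?_)
    gcongr
    · refine hreg (fun y => K x' y) _ (CK / ε ^ d) (2 * ε) hmT₁ (by positivity)
        (by linarith) (by linarith) ?_ ?_
      · intro y hy
        exact K_le hCK hKsize hε hy.1.1.le
      · intro y hy
        rw [mem_ball, dist_comm]
        have h2 : dist x y ≤ ε := hy.2
        linarith
    · refine hreg (fun y => K x' y) _ (CK / (δ / 2) ^ d) (3 / 2 * δ) hmT₂ (by positivity)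
        (by linarith) (by linarith) ?_ ?_
      · intro y hy
        have ht := dist_triangle x x' y
        have h2 : δ ≤ dist x y := hy.2
        exact K_le hCK hKsize (by linarith) (by linarith)
      · intro y hy
        rw [mem_ball, dist_comm]
        have ht := dist_triangle x x' y
        have h2 : dist x' y < δ := hy.1.2
        linarith
  -- the smoothness term, via dyadic annuli
  obtain ⟨N, hN⟩ : ∃ N : ℕ, δ / ε < 2 ^ N := pow_unbounded_of_one_lt _ one_lt_two
  have hNδ : δ < 2 ^ N * ε := by rwa [div_lt_iff₀ hε] at hN
  set Ann : ℕ → Set (Rd d) := fun k =>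
    {y : Rd d | (2:ℝ)^k * ε ≤ dist x y} ∩ {y : Rd d | dist x y < 2^(k+1) * ε} with hAnnDef
  have hmAnn : ∀ k, MeasurableSet (A ∩ Ann k) := by
    intro k
    refine hmA.inter (MeasurableSet.inter ?_ ?_)
    · exact (isClosed_le continuous_const (continuous_const.dist continuous_id)).measurableSet
    · exact (isOpen_lt (continuous_const.dist continuous_id) continuous_const).measurableSet
  have hbk : ∀ k : ℕ, ∫⁻ y in A ∩ Ann k, (‖(K x y - K x' y) * f y‖₊ : ℝ≥0∞) ≤
      (if (2:ℝ)^k * ε < δ then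
        ENNReal.ofReal (ω (((2:ℝ)^(k+1))⁻¹) * 2 ^ d) * V * M else 0) := by
    intro k
    by_cases hk : (2:ℝ)^k * ε < δ
    · rw [if_pos hk]
      have h2k : (0:ℝ) < 2^k * ε := by positivity
      have h2k1 : (2:ℝ) ≤ 2^(k+1) := by
        calc (2:ℝ) = 2^1 := (pow_one 2).symm
          _ ≤ 2^(k+1) := pow_le_pow_right₀ one_le_two (by omega)
      have heq : ω (((2:ℝ)^(k+1))⁻¹) / ((2:ℝ)^k * ε) ^ d * ((2:ℝ)^(k+1) * ε) ^ d
          = ω (((2:ℝ)^(k+1))⁻¹) * 2 ^ d := by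
        rw [show ((2:ℝ)^(k+1) * ε) = 2 * (2^k * ε) by rw [pow_succ]; ring, mul_pow]
        field_simp
        ring
      refine le_trans (hreg (fun y => K x y - K x' y) _
        (ω (((2:ℝ)^(k+1))⁻¹) / ((2:ℝ)^k * ε) ^ d) ((2:ℝ)^(k+1) * ε) (hmAnn k)
        (div_nonneg (mod_nonneg hω (by positivity)) (by positivity)) (by nlinarith)
        (by rw [pow_succ]; nlinarith) ?_ ?_) (le_of_eq (by rw [heq]))
      · intro y hy
        have hd1 : (2:ℝ)^k * ε ≤ dist x y := hy.2.1
        have hdpos : 0 < dist x y := lt_of_lt_of_le h2k hd1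
        have hyA : ε < dist x y := hy.1.1
        have hsm := hKsm x x' y hapos (by linarith)
        have hsm1 : ‖K x y - K x' y‖ ≤ ω (dist x x' / dist x y) / dist x y ^ d :=
          le_trans (le_add_of_nonneg_right (norm_nonneg _)) hsm
        refine le_trans hsm1 ?_
        have hωmono : ω (dist x x' / dist x y) ≤ ω (((2:ℝ)^(k+1))⁻¹) := by
          refine hω.2.1 (mem_Ici.mpr (div_nonneg hapos.le hdpos.le))
            (mem_Ici.mpr (by positivity)) ?_
          rw [div_le_iff₀ hdpos]
          have h1 : (((2:ℝ)^(k+1))⁻¹) * ((2:ℝ)^k * ε) = ε / 2 := by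
            rw [pow_succ]
            field_simp
          calc dist x x' ≤ ε / 2 := hxx'.le
            _ = ((2:ℝ)^(k+1))⁻¹ * (2^k * ε) := h1.symm
            _ ≤ ((2:ℝ)^(k+1))⁻¹ * dist x y := by gcongr
        refine div_le_div₀ (mod_nonneg hω (by positivity)) hωmono (pow_pos h2k d) ?_
        exact pow_le_pow_left₀ h2k.le hd1 d
      · intro y hy
        rw [mem_ball, dist_comm]
        exact hy.2.2
    · rw [if_neg hk]
      have hemp : A ∩ Ann k = ∅ := by
        rw [eq_empty_iff_forall_notMem]
        rintro y ⟨hyA, hyAnn⟩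
        have h1 : dist x y < δ := hyA.2
        have h2 : (2:ℝ)^k * ε ≤ dist x y := hyAnn.1
        push_neg at hk
        linarith
      rw [hemp, Measure.restrict_empty, lintegral_zero_measure]
  have hP : ∫⁻ y in A ∩ A', (‖(K x y - K x' y) * f y‖₊ : ℝ≥0∞) ≤
      ENNReal.ofReal (DiniNorm ω / Real.log 2 * 2 ^ d) * V * M := by
    have hcover : A ⊆ ⋃ k : ℕ, A ∩ Ann k := by
      intro y hy
      obtain ⟨k, hk1, hk2⟩ := exists_annulus hε hy.1
      exact mem_iUnion.2 ⟨k, hy, hk1, hk2⟩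
    calc ∫⁻ y in A ∩ A', (‖(K x y - K x' y) * f y‖₊ : ℝ≥0∞)
        ≤ ∫⁻ y in ⋃ k : ℕ, A ∩ Ann k, (‖(K x y - K x' y) * f y‖₊ : ℝ≥0∞) :=
          lintegral_mono_set (inter_subset_left.trans hcover)
      _ ≤ ∑' k : ℕ, ∫⁻ y in A ∩ Ann k, (‖(K x y - K x' y) * f y‖₊ : ℝ≥0∞) :=
          lintegral_iUnion_le _ _
      _ ≤ ∑' k : ℕ, (if (2:ℝ)^k * ε < δ then
            ENNReal.ofReal (ω (((2:ℝ)^(k+1))⁻¹) * 2 ^ d) * V * M else 0) :=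
          ENNReal.tsum_le_tsum hbk
      _ = ∑ k ∈ Finset.range N, (if (2:ℝ)^k * ε < δ then
            ENNReal.ofReal (ω (((2:ℝ)^(k+1))⁻¹) * 2 ^ d) * V * M else 0) := by
          refine tsum_eq_sum fun k hk => ?_
          rw [Finset.mem_range, not_lt] at hk
          rw [if_neg]
          push_neg
          calc δ ≤ 2 ^ N * ε := hNδ.le
            _ ≤ 2 ^ k * ε := by
                have hpk : (2:ℝ)^N ≤ 2^k := pow_le_pow_right₀ one_le_two hk
                nlinarith
      _ ≤ ∑ k ∈ Finset.range N, ENNReal.ofReal (ω (((2:ℝ)^(k+1))⁻¹) * 2 ^ d) * V * M := by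
          refine Finset.sum_le_sum fun k _ => ?_
          split
          · exact le_rfl
          · exact zero_le
      _ = (∑ k ∈ Finset.range N, ENNReal.ofReal (ω (((2:ℝ)^(k+1))⁻¹) * 2 ^ d)) * V * M := by
          rw [← Finset.sum_mul, ← Finset.sum_mul]
      _ ≤ ENNReal.ofReal (DiniNorm ω / Real.log 2 * 2 ^ d) * V * M := by
          refine mul_le_mul_left (mul_le_mul_left ?_ V) M
          rw [← ENNReal.ofReal_sum_of_nonneg fun k _ =>
            mul_nonneg (mod_nonneg hω (by positivity)) (by positivity)]
          refine ENNReal.ofReal_le_ofReal ?_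
          rw [← Finset.sum_mul]
          have hds := dini_sum hω hD N
          have hsle : ∑ k ∈ Finset.range N, ω (((2:ℝ) ^ (k+1))⁻¹) ≤
              DiniNorm ω / Real.log 2 := by
            rw [le_div_iff₀ hlog2]
            exact hds
          exact mul_le_mul_of_nonneg_right hsle (by positivity)
  -- assemble
  refine le_trans hofReal (le_trans (add_le_add (add_le_add hP hQ) hR) ?_)
  have e_q1 : CK / ε ^ d * (2 * ε) ^ d = CK * 2 ^ d := by
    rw [mul_pow]
    field_simp
  have e_q2 : CK / (δ / 2) ^ d * δ ^ d = CK * 2 ^ d := by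
    rw [div_pow]
    field_simp
  have e_r2 : CK / (δ / 2) ^ d * (3 / 2 * δ) ^ d = CK * 3 ^ d := by
    rw [show ((3:ℝ) / 2 * δ) = 3 * (δ / 2) by ring, mul_pow, div_pow]
    have h2d : ((2:ℝ))^d ≠ 0 := by positivity
    field_simp
  rw [e_q1, e_q2, e_r2]
  have h24 : (2:ℝ)^d ≤ 4^d := pow_le_pow_left₀ (by norm_num) (by norm_num) d
  have h34 : (3:ℝ)^d ≤ 4^d := pow_le_pow_left₀ (by norm_num) (by norm_num) d
  have hDL : 0 ≤ DiniNorm ω / Real.log 2 := div_nonneg hD0 hlog2.le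
  have hfinal_real : DiniNorm ω / Real.log 2 * 2 ^ d + (CK * 2 ^ d + CK * 2 ^ d) +
      (CK * 2 ^ d + CK * 3 ^ d) ≤ C₀ * (CK + DiniNorm ω) := by
    have t1 : DiniNorm ω / Real.log 2 * 2^d ≤ DiniNorm ω / Real.log 2 * 4^d :=
      mul_le_mul_of_nonneg_left h24 hDL
    have t2 : CK * 2^d ≤ CK * 4^d := mul_le_mul_of_nonneg_left h24 hCK
    have t3 : CK * 3^d ≤ CK * 4^d := mul_le_mul_of_nonneg_left h34 hCK
    have hkey : DiniNorm ω / Real.log 2 * 4^d + (CK * 4^d + CK * 4^d) +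
        (CK * 4^d + CK * 4^d) ≤ C₀ * (CK + DiniNorm ω) := by
      rw [hC₀def]
      have hexp : (4:ℝ)^d * (4 + 1 / Real.log 2) * (CK + DiniNorm ω) =
          4^d * 4 * CK + 4^d * (1 / Real.log 2) * CK + 4^d * 4 * DiniNorm ω +
          4^d * (1 / Real.log 2) * DiniNorm ω := by ring
      rw [hexp]
      have hp1 : 0 ≤ (4:ℝ)^d * (1 / Real.log 2) * CK := by positivity
      have hp2 : 0 ≤ (4:ℝ)^d * 4 * DiniNorm ω := by positivity
      have hdd : DiniNorm ω / Real.log 2 * 4^d = 4^d * (1 / Real.log 2) * DiniNorm ω := by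
        ring
      linarith
    linarith
  have h0p : 0 ≤ DiniNorm ω / Real.log 2 * 2 ^ d := by positivity
  have h0q : 0 ≤ CK * 2 ^ d := by positivity
  have h0r : 0 ≤ CK * 3 ^ d := by positivity
  calc ENNReal.ofReal (DiniNorm ω / Real.log 2 * 2 ^ d) * V * M +
        (ENNReal.ofReal (CK * 2 ^ d) * V * M + ENNReal.ofReal (CK * 2 ^ d) * V * M) +
        (ENNReal.ofReal (CK * 2 ^ d) * V * M + ENNReal.ofReal (CK * 3 ^ d) * V * M)
      = (ENNReal.ofReal (DiniNorm ω / Real.log 2 * 2 ^ d) +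
        (ENNReal.ofReal (CK * 2 ^ d) + ENNReal.ofReal (CK * 2 ^ d)) +
        (ENNReal.ofReal (CK * 2 ^ d) + ENNReal.ofReal (CK * 3 ^ d))) * V * M := by ring
    _ = ENNReal.ofReal (DiniNorm ω / Real.log 2 * 2 ^ d + (CK * 2 ^ d + CK * 2 ^ d) +
        (CK * 2 ^ d + CK * 3 ^ d)) * V * M := by
        rw [← ENNReal.ofReal_add h0q h0q, ← ENNReal.ofReal_add h0q h0r,
          ← ENNReal.ofReal_add h0p (by positivity),
          ← ENNReal.ofReal_add (by positivity) (by positivity)]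
    _ ≤ ENNReal.ofReal (C₀ * (CK + DiniNorm ω)) * V * M :=
        mul_le_mul_left (mul_le_mul_left (ENNReal.ofReal_le_ofReal hfinal_real) V) M
    _ = ENNReal.ofReal (V.toReal * C₀ * (CK + DiniNorm ω)) * M := by
        rw [mul_assoc (V.toReal), ENNReal.ofReal_mul ENNReal.toReal_nonneg,
          ENNReal.ofReal_toReal hVlt]
        ring


end
end
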